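/- arXiv:2405.20134 — 10 statements merged into one kernel-verified Lean document; each statement's English description precedes it below -/
import Mathlib

section
/- For every function f : ω+1 → ω+1 define f' : ω+1 → ω+1 by f'(0) = f(0); f'(i+1) = min{f(i+1), f'(i) − 1} if f'(i) ≠ 0, and f'(i+1) = 0 if f'(i) = 0; and f'(ω) = ω if f'(i) = ω for all i ∈ ω, otherwise f'(ω) = 0 (with the convention ω − n = ω). Then f' is a waning function, f'(i) ≤ f(i) for all i ∈ ω, and f' is the pointwise largest waning function with this property (i.e., if g is waning with g(i) ≤ f(i) for all i ∈ ω, then g(i) ≤ f'(i) for all i ∈ ω). -/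
open Set Classical

noncomputable section

/-- A partial injection (partial bijection) on ℕ, viewed as a set of pairs. -/
def IsPInj (g : Set (ℕ × ℕ)) : Prop :=
  ∀ ⦃a b c d : ℕ⦄, (a, b) ∈ g → (c, d) ∈ g → (a = c ↔ b = d)

/-- Domain of a partial injection. -/
def pdom (g : Set (ℕ × ℕ)) : Set ℕ := {x | ∃ y, (x, y) ∈ g}

/-- Image of a partial injection. -/
def pim (g : Set (ℕ × ℕ)) : Set ℕ := {y | ∃ x, (x, y) ∈ g}

/-- Restriction of a partial injection to `{0, …, r-1}`. -/
def pres (g : Set (ℕ × ℕ)) (r : ℕ) : Set (ℕ × ℕ) := {p ∈ g | p.1 < r}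

/-- A waning function `f : ω + 1 → ω + 1`. -/
def Waning (f : ℕ∞ → ℕ∞) : Prop :=
  Antitone f ∧
    ((∀ i, f i = ⊤) ∨
      ((∃ i : ℕ, f i ≠ ⊤) ∧
        ∀ j : ℕ, f j ≠ 0 → f j ≠ ⊤ → f ((j + 1 : ℕ)) < f j))

/-- The inductive definition of `f'` on `ω`. -/
def wan (f : ℕ∞ → ℕ∞) : ℕ → ℕ∞
  | 0 => f 0
  | (i + 1) => if wan f i = 0 then 0 else min (f ((i + 1 : ℕ))) (wan f i - 1)

/-- The extension of `wan f` to `ω + 1`: `f'(ω) = ω` if `f'(i) = ω` for all `i ∈ ω`,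
and `f'(ω) = 0` otherwise. -/
def wanExt (f : ℕ∞ → ℕ∞) : ℕ∞ → ℕ∞ := fun x =>
  if x = ⊤ then (if ∀ i : ℕ, wan f i = ⊤ then ⊤ else 0) else wan f x.toNat


/-
Proof idea: on `ω` the recursion is `f'(i+1) = min (f(i+1)) (f'(i) - 1)` in both of its cases,
since `min x (0 - 1) = 0`. A waning `g` satisfies `g(i+1) ≤ g(i) - 1` everywhere (trivially
where `g(i) ∈ {0, ω}`), so `g ≤ f` gives `g ≤ f'` by induction. Conversely `f'(i+1) ≤ f'(i) - 1`
makes `f'` strictly decreasing while finite and positive, and `f'(ω)` lies below every `f'(i)`,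
which gives monotonicity at `ω`.
-/

lemma ENat.sub_one_lt_self {a : ℕ∞} (h0 : a ≠ 0) (ht : a ≠ ⊤) : a - 1 < a :=
  (ENat.addLECancellable_of_ne_top ht).tsub_lt_self (pos_iff_ne_zero.2 h0) one_pos

lemma Waning.apply_succ_le_sub_one {g : ℕ∞ → ℕ∞} (hg : Waning g) (i : ℕ) :
    g ((i + 1 : ℕ)) ≤ g i - 1 := by
  obtain ⟨hanti, hall | ⟨-, hdec⟩⟩ := hg
  · simp [hall]
  by_cases h0 : g i = 0
  · simpa [h0] using hanti (by exact_mod_cast i.le_succ : (i : ℕ∞) ≤ (i + 1 : ℕ))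
  by_cases ht : g i = ⊤
  · simp [ht]
  exact ENat.le_sub_one_of_lt (hdec i h0 ht)

section wan

variable (f : ℕ∞ → ℕ∞)

lemma wan_succ (i : ℕ) : wan f (i + 1) = min (f ((i + 1 : ℕ))) (wan f i - 1) := by
  rw [wan]
  split_ifs with h0
  · simp [h0]
  · rfl

lemma wan_le_apply (i : ℕ) : wan f i ≤ f i := by
  cases i with
  | zero => exact le_rfl
  | succ i => exact (wan_succ f i).trans_le (min_le_left _ _)

lemma wan_succ_le_sub_one (i : ℕ) : wan f (i + 1) ≤ wan f i - 1 :=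
  (wan_succ f i).trans_le (min_le_right _ _)

lemma wan_antitone : Antitone (wan f) :=
  antitone_nat_of_succ_le fun i => (wan_succ_le_sub_one f i).trans tsub_le_self

lemma wan_succ_lt (i : ℕ) (h0 : wan f i ≠ 0) (ht : wan f i ≠ ⊤) : wan f (i + 1) < wan f i :=
  (wan_succ_le_sub_one f i).trans_lt (ENat.sub_one_lt_self h0 ht)

lemma Waning.le_wan {g : ℕ∞ → ℕ∞} (hg : Waning g) (hle : ∀ i : ℕ, g i ≤ f i) (i : ℕ) :
    g i ≤ wan f i := by
  induction i with
  | zero => exact hle 0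
  | succ i ih =>
    rw [wan_succ]
    exact le_min (hle _) ((hg.apply_succ_le_sub_one i).trans (tsub_le_tsub_right ih 1))

@[simp]
lemma wanExt_natCast (i : ℕ) : wanExt f i = wan f i := by
  simp [wanExt]

lemma wanExt_top_le_wan (i : ℕ) : wanExt f ⊤ ≤ wan f i := by
  by_cases hall : ∀ j : ℕ, wan f j = ⊤ <;> simp [wanExt, hall]

lemma wanExt_antitone : Antitone (wanExt f) := by
  intro x y hxy
  induction y using ENat.recTopCoe with
  | top =>
    induction x using ENat.recTopCoe with
    | top => exact le_rfl
    | coe i => simpa using wanExt_top_le_wan f i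
  | coe j =>
    lift x to ℕ using ne_top_of_le_ne_top (ENat.natCast_ne_top j) hxy
    simpa using wan_antitone f (by exact_mod_cast hxy)

lemma waning_wanExt : Waning (wanExt f) := by
  refine ⟨wanExt_antitone f, ?_⟩
  by_cases hall : ∀ i : ℕ, wan f i = ⊤
  · left
    intro x
    induction x using ENat.recTopCoe <;> simp [wanExt, hall]
  · obtain ⟨i, hi⟩ := not_forall.1 hall
    refine Or.inr ⟨⟨i, by simpa using hi⟩, fun j h0 ht => ?_⟩
    simp only [wanExt_natCast] at h0 ht ⊢
    exact wan_succ_lt f j h0 ht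

end wan

/-- `f'` is a waning function, `f'(i) ≤ f(i)` for all `i ∈ ω`, and `f'` is the pointwise
largest waning function with this property. -/
theorem wanExt_is_largest_waning_below (f : ℕ∞ → ℕ∞) :
    Waning (wanExt f) ∧ (∀ i : ℕ, wanExt f i ≤ f i) ∧
      ∀ g : ℕ∞ → ℕ∞, Waning g → (∀ i : ℕ, g i ≤ f i) → ∀ i : ℕ, g i ≤ wanExt f i :=
  ⟨waning_wanExt f, fun i => by simpa using wan_le_apply f i,
    fun _ hg hle i => by simpa using hg.le_wan f hle i⟩
end
end

section
/- Let f be a waning function with f(ω) = 0, let n ∈ ℕ and X a finite subset of ℕ. If g is a partial injection on ℕ with |im(g) \ X| ≥ n and |X ∩ im(g)| ≥ f(n), then f(|g|) = 0. -/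
open Set Classical

noncomputable section

/-- Below a finite value, a waning function loses at least one unit per step until it
reaches `0`. -/
theorem Waning.apply_add_eq_zero_of_apply_le {f : ℕ∞ → ℕ∞} (hf : Waning f)
    (htop : f ⊤ ≠ ⊤) {n k : ℕ} (h : f n ≤ k) : f ↑(n + k) = 0 := by
  obtain ⟨hmono, hconst | ⟨-, hdec⟩⟩ := hf
  · exact absurd (hconst ⊤) htop
  induction k generalizing n with
  | zero => simpa using h
  | succ k ih =>
    by_cases h0 : f n = 0
    · exact nonpos_iff_eq_zero.1 (h0 ▸ hmono (by simp))
    have hfin : f n ≠ ⊤ := ne_top_of_le_ne_top (by simp) h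
    have hnext : f ↑(n + 1) ≤ k :=
      (ENat.lt_add_one_iff (ENat.natCast_ne_top k)).1 <|
        (hdec n h0 hfin).trans_le (by exact_mod_cast h)
    simpa only [Nat.add_right_comm, Nat.add_assoc] using ih hnext

theorem encard_pim_le (g : Set (ℕ × ℕ)) : (pim g).encard ≤ g.encard := by
  have : pim g = Prod.snd '' g := by ext; simp [pim]
  exact this ▸ encard_image_le _ _

theorem waning_apply_encard_eq_zero_general (f : ℕ∞ → ℕ∞) (hf : Waning f) (hftop : f ⊤ = 0)
    (n : ℕ) (X : Finset ℕ) (g : Set (ℕ × ℕ))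
    (h1 : (n : ℕ∞) ≤ (pim g \ ↑X).encard)
    (h2 : f n ≤ ((↑X : Set ℕ) ∩ pim g).encard) :
    f g.encard = 0 := by
  have hfin : f n ≠ ⊤ :=
    (h2.trans_lt ((encard_mono inter_subset_left).trans_lt X.finite_toSet.encard_lt_top)).ne
  lift f n to ℕ using hfin with k hk
  have hcard : ((n + k : ℕ) : ℕ∞) ≤ g.encard :=
    calc ((n + k : ℕ) : ℕ∞) = n + k := by push_cast; rfl
      _ ≤ (pim g \ ↑X).encard + (pim g ∩ ↑X).encard :=
          add_le_add h1 (inter_comm (pim g) _ ▸ h2)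
      _ = (pim g).encard := encard_sdiff_add_encard_inter _ _
      _ ≤ g.encard := encard_pim_le g
  exact nonpos_iff_eq_zero.1 <| (hf.1 hcard).trans_eq <|
    hf.apply_add_eq_zero_of_apply_le (by simp [hftop]) hk.ge

/-- Let `f` be waning with `f(ω) = 0`, `n ∈ ℕ`, `X ⊆ ℕ` finite. If `g` is a partial
injection with `|im(g) \ X| ≥ n` and `|X ∩ im(g)| ≥ f(n)`, then `f(|g|) = 0`. -/
theorem waning_apply_encard_eq_zero (f : ℕ∞ → ℕ∞) (hf : Waning f) (hftop : f ⊤ = 0)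
    (n : ℕ) (X : Finset ℕ) (g : Set (ℕ × ℕ)) (hg : IsPInj g)
    (h1 : (n : ℕ∞) ≤ (pim g \ ↑X).encard)
    (h2 : f n ≤ ((↑X : Set ℕ) ∩ pim g).encard) :
    f g.encard = 0 :=
  waning_apply_encard_eq_zero_general f hf hftop n X g h1 h2
end
end

section
/- Let g be a finite idempotent of the symmetric inverse monoid I_ℕ (i.e., a restriction of the identity to a finite set). For a finite subset X of ℕ, let i_X : ℕ → ℕ \ X be the unique order isomorphism. Define d_g on the set ↑g = {h ∈ I_ℕ : g ⊆ h} by (h)d_g = i_{dom(g)} ∘ h ∘ i_{im(g)}^{-1}. Then d_g is a semigroup isomorphism from ↑g (which is closed under composition) onto I_ℕ. -/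
/-!
Since `g` is a partial identity, `dom g = im g`, so the two order isomorphisms coincide and
`d_g` is the pullback along `e × e` for a single injection `e` onto `(dom g)ᶜ`. A partial
bijection `h ⊇ g` fixes every point of `dom g` (as `g` does), hence maps no point outside
`dom g` into it. So `h = g ∪ (e × e)(d_g h)`, which makes `d_g` injective with inverse
`m ↦ g ∪ (e × e)(m)`, and the middle point of any composite in `h k` lies outside `dom g`,
i.e. in the range of `e`.
-/

open Set Classical

noncomputable section

/-- Composition of partial injections, as relations (apply the left one first,
following the paper's left-to-right convention). -/
def pcomp (g h : Set (ℕ × ℕ)) : Set (ℕ × ℕ) := {p | ∃ b, (p.1, b) ∈ g ∧ (b, p.2) ∈ h}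

open Function

section PartialBijections

variable {g h k m : Set (ℕ × ℕ)} {e : ℕ → ℕ}

theorem mk_self_mem_of_mem_pdom (hid : ∀ p ∈ g, p.1 = p.2) {x : ℕ} (hx : x ∈ pdom g) :
    (x, x) ∈ g := by
  obtain ⟨y, hy⟩ := hx
  obtain rfl : x = y := hid _ hy
  exact hy

theorem pdom_eq_pim_of_forall_fst_eq_snd (hid : ∀ p ∈ g, p.1 = p.2) : pdom g = pim g := by
  ext x
  constructor
  · exact fun hx => ⟨x, mk_self_mem_of_mem_pdom hid hx⟩
  · rintro ⟨y, hy⟩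
    obtain rfl : y = x := hid _ hy
    exact ⟨y, hy⟩

theorem isPInj_of_forall_fst_eq_snd (hid : ∀ p ∈ g, p.1 = p.2) : IsPInj g := by
  intro a b c d hab hcd
  obtain rfl : a = b := hid _ hab
  obtain rfl : c = d := hid _ hcd
  rfl

theorem IsPInj.eq_of_fst_mem_pdom (hk : IsPInj k) (hgk : g ⊆ k)
    (hid : ∀ p ∈ g, p.1 = p.2) {x y : ℕ} (hxy : (x, y) ∈ k) (hx : x ∈ pdom g) : x = y :=
  ((hk hxy (hgk (mk_self_mem_of_mem_pdom hid hx))).mp rfl).symm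

theorem IsPInj.eq_of_snd_mem_pdom (hk : IsPInj k) (hgk : g ⊆ k)
    (hid : ∀ p ∈ g, p.1 = p.2) {x y : ℕ} (hxy : (x, y) ∈ k) (hy : y ∈ pdom g) : x = y :=
  (hk hxy (hgk (mk_self_mem_of_mem_pdom hid hy))).mpr rfl

theorem IsPInj.union (hg : IsPInj g) (hm : IsPInj m)
    (hdom : Disjoint (pdom g) (pdom m)) (him : Disjoint (pim g) (pim m)) : IsPInj (g ∪ m) := by
  have cross : ∀ {a b c d}, (a, b) ∈ g → (c, d) ∈ m → a ≠ c ∧ b ≠ d := fun hab hcd =>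
    ⟨hdom.ne_of_mem ⟨_, hab⟩ ⟨_, hcd⟩, him.ne_of_mem ⟨_, hab⟩ ⟨_, hcd⟩⟩
  rintro a b c d (hab | hab) (hcd | hcd)
  · exact hg hab hcd
  · exact iff_of_false (cross hab hcd).1 (cross hab hcd).2
  · exact iff_of_false (cross hcd hab).1.symm (cross hcd hab).2.symm
  · exact hm hab hcd

theorem IsPInj.preimage_prodMap (he : Injective e) (hh : IsPInj h) :
    IsPInj (Prod.map e e ⁻¹' h) := fun _ _ _ _ hab hcd =>
  ⟨fun hac => he ((hh hab hcd).mp (congrArg e hac)),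
    fun hbd => he ((hh hab hcd).mpr (congrArg e hbd))⟩

theorem IsPInj.image_prodMap (he : Injective e) (hm : IsPInj m) :
    IsPInj (Prod.map e e '' m) := by
  rintro _ _ _ _ ⟨⟨a, b⟩, hab, habe⟩ ⟨⟨c, d⟩, hcd, hcde⟩
  simp only [Prod.map, Prod.mk.injEq] at habe hcde
  obtain ⟨rfl, rfl⟩ := habe
  obtain ⟨rfl, rfl⟩ := hcde
  rw [he.eq_iff, he.eq_iff]
  exact hm hab hcd

theorem pdom_image_prodMap_subset (m : Set (ℕ × ℕ)) : pdom (Prod.map e e '' m) ⊆ range e := by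
  rintro _ ⟨_, ⟨p, _, hp⟩⟩
  exact ⟨p.1, congrArg Prod.fst hp⟩

theorem pim_image_prodMap_subset (m : Set (ℕ × ℕ)) : pim (Prod.map e e '' m) ⊆ range e := by
  rintro _ ⟨_, ⟨p, _, hp⟩⟩
  exact ⟨p.2, congrArg Prod.snd hp⟩

theorem preimage_prodMap_pcomp (hid : ∀ p ∈ g, p.1 = p.2) (hrange : range e = (pdom g)ᶜ)
    (hgk : g ⊆ k) (hk : IsPInj k) :
    Prod.map e e ⁻¹' pcomp h k = pcomp (Prod.map e e ⁻¹' h) (Prod.map e e ⁻¹' k) := by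
  ext ⟨a, c⟩
  constructor
  · rintro ⟨b, hab, hbc⟩
    -- `b ∈ dom g` would force `b = e c`, but `e c ∉ dom g`.
    have hb : b ∈ range e := by
      rw [hrange]
      intro hb
      have hce : e c ∈ (pdom g)ᶜ := hrange ▸ mem_range_self c
      have hbc' : b = e c := hk.eq_of_fst_mem_pdom hgk hid hbc hb
      exact hce (hbc' ▸ hb)
    obtain ⟨b, rfl⟩ := hb
    exact ⟨b, hab, hbc⟩
  · rintro ⟨b, hab, hbc⟩
    exact ⟨e b, hab, hbc⟩

theorem subset_of_preimage_prodMap_subset (hid : ∀ p ∈ g, p.1 = p.2)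
    (hrange : range e = (pdom g)ᶜ) (hgh : g ⊆ h) (hh : IsPInj h) (hgk : g ⊆ k)
    (hsub : Prod.map e e ⁻¹' h ⊆ Prod.map e e ⁻¹' k) : h ⊆ k := by
  rintro ⟨x, y⟩ hxy
  by_cases hx : x ∈ pdom g
  · obtain rfl := hh.eq_of_fst_mem_pdom hgh hid hxy hx
    exact hgk (mk_self_mem_of_mem_pdom hid hx)
  · have hy : y ∉ pdom g := fun hy => hx (hh.eq_of_snd_mem_pdom hgh hid hxy hy ▸ hy)
    obtain ⟨a, rfl⟩ : x ∈ range e := hrange ▸ hx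
    obtain ⟨b, rfl⟩ : y ∈ range e := hrange ▸ hy
    exact hsub (show (a, b) ∈ Prod.map e e ⁻¹' h from hxy)

theorem preimage_prodMap_union_image (hrange : range e = (pdom g)ᶜ) (he : Injective e)
    (m : Set (ℕ × ℕ)) :
    Prod.map e e ⁻¹' (g ∪ Prod.map e e '' m) = m := by
  have hg : Prod.map e e ⁻¹' g = ∅ :=
    eq_empty_of_forall_notMem fun p hp =>
      (hrange ▸ mem_range_self p.1 : e p.1 ∈ (pdom g)ᶜ) ⟨_, hp⟩
  rw [preimage_union, hg, empty_union, preimage_image_eq _ (he.prodMap he)]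

theorem isPInj_union_image_prodMap (hid : ∀ p ∈ g, p.1 = p.2) (hrange : range e = (pdom g)ᶜ)
    (he : Injective e) (hm : IsPInj m) :
    IsPInj (g ∪ Prod.map e e '' m) := by
  have hdisj : Disjoint (pdom g) (range e) := hrange ▸ disjoint_compl_right
  refine (isPInj_of_forall_fst_eq_snd hid).union (hm.image_prodMap he)
    (hdisj.mono_right (pdom_image_prodMap_subset m)) ?_
  rw [← pdom_eq_pim_of_forall_fst_eq_snd hid]
  exact hdisj.mono_right (pim_image_prodMap_subset m)

end PartialBijections

theorem dg_is_isomorphism_general (g : Set (ℕ × ℕ))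
    (hid : ∀ p ∈ g, (p : ℕ × ℕ).1 = p.2)
    (iD iI : ℕ → ℕ)
    (hD : StrictMono iD) (hDr : Set.range iD = (pdom g)ᶜ)
    (hI : StrictMono iI) (hIr : Set.range iI = (pim g)ᶜ) :
    (∀ h, g ⊆ h → IsPInj h → IsPInj {p : ℕ × ℕ | (iD p.1, iI p.2) ∈ h}) ∧
    (∀ h k, g ⊆ h → g ⊆ k → IsPInj h → IsPInj k →
      {p : ℕ × ℕ | (iD p.1, iI p.2) ∈ pcomp h k} =
        pcomp {p : ℕ × ℕ | (iD p.1, iI p.2) ∈ h} {p : ℕ × ℕ | (iD p.1, iI p.2) ∈ k}) ∧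
    Set.BijOn (fun h => {p : ℕ × ℕ | (iD p.1, iI p.2) ∈ h})
      {h | g ⊆ h ∧ IsPInj h} {h | IsPInj h} := by
  obtain rfl : iD = iI :=
    (hD.range_inj hI).mp (by rw [hDr, hIr, pdom_eq_pim_of_forall_fst_eq_snd hid])
  refine ⟨fun h _ hh => hh.preimage_prodMap hD.injective,
    fun h k _ hgk _ hk => preimage_prodMap_pcomp hid hDr hgk hk,
    fun h hh => hh.2.preimage_prodMap hD.injective, ?_, ?_⟩
  · intro h hh k hk hhk
    exact (subset_of_preimage_prodMap_subset hid hDr hh.1 hh.2 hk.1 hhk.le).antisymm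
      (subset_of_preimage_prodMap_subset hid hDr hk.1 hk.2 hh.1 hhk.ge)
  · intro m hm
    exact ⟨g ∪ Prod.map iD iD '' m,
      ⟨subset_union_left, isPInj_union_image_prodMap hid hDr hD.injective hm⟩,
      preimage_prodMap_union_image hDr hD.injective m⟩

/-- For a finite idempotent `g` of `I_ℕ` (a partial identity), the map
`d_g : ↑g → I_ℕ`, `h ↦ i_{dom g} ∘ h ∘ i_{im g}⁻¹`, is a semigroup isomorphism from
`↑g = {h : g ⊆ h}` onto `I_ℕ`.  Here `iD` (resp. `iI`) is the unique order isomorphism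
from `ℕ` onto `ℕ \ dom g` (resp. `ℕ \ im g`). -/
theorem dg_is_isomorphism (g : Set (ℕ × ℕ)) (hg : IsPInj g) (hfin : g.Finite)
    (hid : ∀ p ∈ g, (p : ℕ × ℕ).1 = p.2)
    (iD iI : ℕ → ℕ)
    (hD : StrictMono iD) (hDr : Set.range iD = (pdom g)ᶜ)
    (hI : StrictMono iI) (hIr : Set.range iI = (pim g)ᶜ) :
    (∀ h, g ⊆ h → IsPInj h → IsPInj {p : ℕ × ℕ | (iD p.1, iI p.2) ∈ h}) ∧
    (∀ h k, g ⊆ h → g ⊆ k → IsPInj h → IsPInj k →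
      {p : ℕ × ℕ | (iD p.1, iI p.2) ∈ pcomp h k} =
        pcomp {p : ℕ × ℕ | (iD p.1, iI p.2) ∈ h} {p : ℕ × ℕ | (iD p.1, iI p.2) ∈ k}) ∧
    Set.BijOn (fun h => {p : ℕ × ℕ | (iD p.1, iI p.2) ∈ h})
      {h | g ⊆ h ∧ IsPInj h} {h | IsPInj h} :=
  dg_is_isomorphism_general g hid iD iI hD hDr hI hIr
end
end

section
/- Let f be a waning function, g ∈ I_ℕ, and r ∈ ℕ with f(r) ≤ f(|g|) = f(|g↾r|). Define W_{f,g,r} = {h ∈ I_ℕ : h↾r = g↾r and |im(h) ∩ (r \ im(g))| ≤ f(|g|)}. Then for any p ≥ r, W_{f,g,p} is defined (i.e., f(p) ≤ f(|g|) = f(|g↾p|)) and W_{f,g,p} ⊆ W_{f,g,r}. -/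
open Set Classical

noncomputable section

/-- The set `W_{f,g,r} = {h : h↾r = g↾r and |im(h) ∩ (r \ im(g))| ≤ f(|g|)}`. -/
def Wset (f : ℕ∞ → ℕ∞) (g : Set (ℕ × ℕ)) (r : ℕ) : Set (Set (ℕ × ℕ)) :=
  {h | IsPInj h ∧ pres h r = pres g r ∧
    (pim h ∩ ({y | y < r} \ pim g)).encard ≤ f g.encard}

lemma pres_subset (g : Set (ℕ × ℕ)) (r : ℕ) : pres g r ⊆ g := fun _ hx => hx.1

lemma pres_mono (g : Set (ℕ × ℕ)) {r p : ℕ} (hp : r ≤ p) : pres g r ⊆ pres g p :=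
  fun _ hx => ⟨hx.1, hx.2.trans_le hp⟩

lemma pres_pres_of_le (g : Set (ℕ × ℕ)) {r p : ℕ} (hp : r ≤ p) :
    pres (pres g p) r = pres g r := by
  ext x
  exact ⟨fun hx => ⟨hx.1.1, hx.2⟩, fun hx => ⟨pres_mono g hp hx, hx.2⟩⟩

lemma pres_eq_of_pres_eq_of_le {g h : Set (ℕ × ℕ)} {r p : ℕ} (hp : r ≤ p)
    (hgh : pres h p = pres g p) : pres h r = pres g r := by
  rw [← pres_pres_of_le h hp, hgh, pres_pres_of_le g hp]

lemma apply_encard_pres_eq_of_le {f : ℕ∞ → ℕ∞} (hf : Antitone f) {g : Set (ℕ × ℕ)} {r p : ℕ}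
    (hp : r ≤ p) (hr : f g.encard = f (pres g r).encard) :
    f g.encard = f (pres g p).encard :=
  le_antisymm (hf (encard_mono (pres_subset g p)))
    (hr ▸ hf (encard_mono (pres_mono g hp)))

lemma Wset_anti (f : ℕ∞ → ℕ∞) (g : Set (ℕ × ℕ)) {r p : ℕ} (hp : r ≤ p) :
    Wset f g p ⊆ Wset f g r := by
  rintro h ⟨hinj, hpres, hcard⟩
  refine ⟨hinj, pres_eq_of_pres_eq_of_le hp hpres, le_trans (encard_mono ?_) hcard⟩
  rintro y ⟨hy, hyr, hyg⟩
  exact ⟨hy, lt_of_lt_of_le hyr hp, hyg⟩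

theorem Wset_defined_and_subset_general (f : ℕ∞ → ℕ∞) (hf : Waning f)
    (g : Set (ℕ × ℕ)) (r : ℕ)
    (hr1 : f r ≤ f g.encard) (hr2 : f g.encard = f (pres g r).encard)
    (p : ℕ) (hp : r ≤ p) :
    (f p ≤ f g.encard ∧ f g.encard = f (pres g p).encard) ∧
      Wset f g p ⊆ Wset f g r :=
  ⟨⟨(hf.1 (Nat.cast_le.mpr hp)).trans hr1, apply_encard_pres_eq_of_le hf.1 hp hr2⟩,
    Wset_anti f g hp⟩

/-- If `W_{f,g,r}` is defined (i.e. `f(r) ≤ f(|g|) = f(|g↾r|)`), then for any `p ≥ r`,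
`W_{f,g,p}` is defined and `W_{f,g,p} ⊆ W_{f,g,r}`. -/
theorem Wset_defined_and_subset (f : ℕ∞ → ℕ∞) (hf : Waning f)
    (g : Set (ℕ × ℕ)) (hg : IsPInj g) (r : ℕ)
    (hr1 : f r ≤ f g.encard) (hr2 : f g.encard = f (pres g r).encard)
    (p : ℕ) (hp : r ≤ p) :
    (f p ≤ f g.encard ∧ f g.encard = f (pres g p).encard) ∧
      Wset f g p ⊆ Wset f g r :=
  Wset_defined_and_subset_general f hf g r hr1 hr2 p hp
end
end

section
/- In the symmetric inverse monoid I_ℕ with the topology generated by the sets {h : (x,y) ∈ h}, {h : x ∉ dom h}, {h : x ∉ im h} (x, y ∈ ℕ), every basic open set of the form U = {f ∈ I_ℕ : f↾n = h and im(f) ∩ X = ∅}, where n ∈ ℕ, X ⊆ ℕ is finite, and h : a subset of {0,…,n−1} → ℕ \ X is a partial injection, is closed in the topology I₂ generated by {h : (x,y) ∈ h} and {h : x ∉ dom h}, but is not compact in I₂: the open cover consisting of the sets {f : f(n) = m} for m ∈ ℕ together with {f : n ∉ dom f} has no finite subcover of U when U is nonempty and infinite. -/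
open Set Classical

noncomputable section

/-- The symmetric inverse monoid `I_ℕ` as a type: partial bijections on `ℕ`. -/
def PB : Type := {g : Set (ℕ × ℕ) // IsPInj g}

/-- `U_{x,y} = {h : (x,y) ∈ h}`. -/
def Uxy (x y : ℕ) : Set PB := {h | (x, y) ∈ h.1}

/-- `W_x = {h : x ∉ dom h}`. -/
def Wlow (x : ℕ) : Set PB := {h | x ∉ pdom h.1}

/-- The subbasis for the topology `I₂`. -/
def I2sub : Set (Set PB) := {S | ∃ x y, S = Uxy x y} ∪ {S | ∃ x, S = Wlow x}

/-- The topology `I₂` on `I_ℕ`. -/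
def I2 : TopologicalSpace PB := .generateFrom I2sub

/-- `U_{f,n,X} = {g : |im(g) \ X| ≥ n and |X ∩ im(g)| ≤ f(n)}`. -/
def UfnX (f : ℕ∞ → ℕ∞) (n : ℕ) (X : Finset ℕ) : Set PB :=
  {g | (n : ℕ∞) ≤ (pim g.1 \ ↑X).encard ∧ ((↑X : Set ℕ) ∩ pim g.1).encard ≤ f n}

/-- The topology `T_f`: the least topology containing `I₂` and all the sets `U_{f,n,X}`. -/
def Tw (f : ℕ∞ → ℕ∞) : TopologicalSpace PB :=
  .generateFrom (I2sub ∪ {S | ∃ n X, S = UfnX f n X})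

/-!
Every `U_{x,y}` is clopen in `I₂`: its complement is `W_x ∪ ⋃_{y' ≠ y} U_{x,y'}` because a
partial injection is a partial function. The set `U` is cut out by conditions on the
membership of single pairs, hence is closed.
It is not compact: the cover by `W_n` and the `U_{n,m}` has no finite subcover, since
for any finite `M` the partial injection `h₀ ∪ {(n, y)}` with `y` outside `M`, `X` and
`im h₀` lies in `U` but in none of `W_n`, `U_{n,m}` (`m ∈ M`).
-/

namespace IsPInj

variable {g : Set (ℕ × ℕ)}

theorem eq_of_mem (hg : IsPInj g) {x y y' : ℕ} (h : (x, y) ∈ g) (h' : (x, y') ∈ g) : y = y' :=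
  (hg h h').mp rfl

theorem finite (hg : IsPInj g) (hdom : (pdom g).Finite) : g.Finite := by
  refine Finite.of_finite_image (f := Prod.fst) (hdom.subset ?_) fun p hp q hq hpq => ?_
  · rintro _ ⟨p, hp, rfl⟩
    exact ⟨p.2, hp⟩
  · obtain ⟨a, b⟩ := p
    obtain ⟨c, d⟩ := q
    simp only at hpq
    subst hpq
    rw [hg.eq_of_mem hp hq]

theorem insert (hg : IsPInj g) {a b : ℕ} (ha : a ∉ pdom g) (hb : b ∉ pim g) :
    IsPInj (insert (a, b) g) := by
  rintro x y x' y' (hxy | hxy) (hxy' | hxy')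
  · simp_all
  · simp only [Prod.mk.injEq] at hxy
    obtain ⟨rfl, rfl⟩ := hxy
    exact iff_of_false (fun h => ha ⟨y', h ▸ hxy'⟩) fun h => hb ⟨x', h ▸ hxy'⟩
  · simp only [Prod.mk.injEq] at hxy'
    obtain ⟨rfl, rfl⟩ := hxy'
    exact iff_of_false (fun h => ha ⟨y, h ▸ hxy⟩) fun h => hb ⟨x, h ▸ hxy⟩
  · exact hg hxy hxy'

end IsPInj

theorem finite_pim {g : Set (ℕ × ℕ)} (hg : g.Finite) : (pim g).Finite :=
  (hg.image Prod.snd).subset fun y ⟨x, hxy⟩ => ⟨(x, y), hxy, rfl⟩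

theorem pim_insert (g : Set (ℕ × ℕ)) (a b : ℕ) : pim (insert (a, b) g) = insert b (pim g) := by
  ext y
  simp [pim, exists_or, eq_comm]

theorem pres_insert_eq_of_forall_lt {g : Set (ℕ × ℕ)} {r : ℕ} (hg : ∀ p ∈ g, p.1 < r) (b : ℕ) :
    pres (insert (r, b) g) r = g := by
  ext p
  simp only [pres, mem_ofPred_eq, mem_insert_iff]
  exact ⟨fun ⟨hp, hlt⟩ => hp.resolve_left fun h => (h ▸ hlt).false, fun hp => ⟨.inr hp, hg p hp⟩⟩

section Topology

attribute [local instance] I2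

theorem isOpen_Uxy (x y : ℕ) : IsOpen (Uxy x y) :=
  .basic _ (.inl ⟨x, y, rfl⟩)

theorem isOpen_Wlow (x : ℕ) : IsOpen (Wlow x) :=
  .basic _ (.inr ⟨x, rfl⟩)

theorem compl_Uxy (x y : ℕ) : (Uxy x y)ᶜ = Wlow x ∪ ⋃ (y' : ℕ) (_ : y' ≠ y), Uxy x y' := by
  ext f
  simp only [mem_compl_iff, mem_union, mem_iUnion, Uxy, Wlow, pdom,
    mem_ofPred_eq, exists_prop]
  constructor
  · intro hxy
    by_cases hx : ∃ y', (x, y') ∈ f.1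
    · obtain ⟨y', hy'⟩ := hx
      exact .inr ⟨y', fun h => hxy (h ▸ hy'), hy'⟩
    · exact .inl hx
  · rintro (hx | ⟨y', hne, hy'⟩) hxy
    · exact hx ⟨y, hxy⟩
    · exact hne (f.2.eq_of_mem hy' hxy)

theorem isClopen_Uxy (x y : ℕ) : IsClopen (Uxy x y) := by
  refine ⟨⟨?_⟩, isOpen_Uxy x y⟩
  rw [compl_Uxy]
  exact (isOpen_Wlow x).union (isOpen_biUnion fun y' _ => isOpen_Uxy x y')

theorem isClosed_setOf_mem (p : ℕ × ℕ) (R : Prop → Prop) : IsClosed {f : PB | R (p ∈ f.1)} := by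
  have hp := (continuous_boolIndicator_iff_isClopen _).mpr (isClopen_Uxy p.1 p.2)
  convert (isClosed_discrete {b | R (b = true)}).preimage hp using 1
  ext f
  simp only [mem_preimage, mem_ofPred_eq, ← mem_iff_boolIndicator, Uxy]

def basicI4 (n : ℕ) (X : Finset ℕ) (h0 : Set (ℕ × ℕ)) : Set PB :=
  {f | pres f.1 n = h0 ∧ pim f.1 ∩ ↑X = ∅}

theorem basicI4_eq_iInter (n : ℕ) (X : Finset ℕ) (h0 : Set (ℕ × ℕ)) :
    basicI4 n X h0 =
      ⋂ p : ℕ × ℕ, {f : PB | (p ∈ f.1 ∧ p.1 < n ↔ p ∈ h0) ∧ (p ∈ f.1 → p.2 ∉ X)} := by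
  ext f
  simp only [basicI4, mem_ofPred_eq, mem_iInter, forall_and]
  exact and_congr Set.ext_iff (by
    simp only [pim, eq_empty_iff_forall_notMem, mem_inter_iff, mem_ofPred_eq,
      SetLike.mem_coe, not_and, forall_exists_index, Prod.forall]
    exact forall_comm)

theorem isClosed_basicI4 (n : ℕ) (X : Finset ℕ) (h0 : Set (ℕ × ℕ)) :
    IsClosed (basicI4 n X h0) := by
  rw [basicI4_eq_iInter]
  exact isClosed_iInter fun p =>
    isClosed_setOf_mem p fun P => (P ∧ p.1 < n ↔ p ∈ h0) ∧ (P → p.2 ∉ X)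

theorem exists_finset_subset_biUnion_Uxy_union_Wlow {K : Set PB} (hK : IsCompact K) (x : ℕ) :
    ∃ M : Finset ℕ, K ⊆ (⋃ m ∈ M, Uxy x m) ∪ Wlow x := by
  have hcover : K ⊆ ⋃ m, Uxy x m ∪ Wlow x := fun f _ => by
    by_cases hx : x ∈ pdom f.1
    · obtain ⟨m, hm⟩ := hx
      exact mem_iUnion.mpr ⟨m, .inl hm⟩
    · exact mem_iUnion.mpr ⟨0, .inr hx⟩
  obtain ⟨M, hM⟩ :=
    hK.elim_finite_subcover _ (fun m => (isOpen_Uxy x m).union (isOpen_Wlow x)) hcover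
  exact ⟨M, hM.trans (iUnion₂_subset fun m hm =>
    union_subset_union_left _ (subset_biUnion_of_mem hm))⟩

end Topology

theorem exists_mem_basicI4_notMem {n : ℕ} {X : Finset ℕ} {h0 : Set (ℕ × ℕ)} (hh0 : IsPInj h0)
    (hdom : ∀ p ∈ h0, p.1 < n) (him : ∀ p ∈ h0, p.2 ∉ X) (M : Finset ℕ) :
    ∃ f ∈ basicI4 n X h0, f ∉ (⋃ m ∈ M, Uxy n m) ∪ Wlow n := by
  have hn : n ∉ pdom h0 := fun ⟨y, hy⟩ => (hdom _ hy).false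
  have hfin : (pim h0).Finite :=
    finite_pim (hh0.finite ((finite_Iio n).subset fun _ ⟨_, hxy⟩ => hdom _ hxy))
  obtain ⟨y, hy⟩ := ((X.finite_toSet.union M.finite_toSet).union hfin).exists_notMem
  simp only [mem_union, Finset.mem_coe, not_or] at hy
  obtain ⟨⟨hyX, hyM⟩, hyim⟩ := hy
  have hins := hh0.insert hn hyim
  refine ⟨⟨_, hins⟩, ⟨pres_insert_eq_of_forall_lt hdom y, ?_⟩, ?_⟩
  · rw [pim_insert, insert_inter_of_notMem hyX]
    exact eq_empty_of_forall_notMem fun b ⟨⟨a, hab⟩, hbX⟩ => him _ hab hbX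
  · rintro (hU | hW)
    · obtain ⟨m, hm, hnm⟩ := mem_iUnion₂.mp hU
      exact hyM (hins.eq_of_mem (mem_insert _ _) hnm ▸ hm)
    · exact hW ⟨y, mem_insert _ _⟩

/-- Every basic `I₄`-open set `U = {f : f↾n = h₀ and im(f) ∩ X = ∅}` (where `h₀` is a
partial injection from a subset of `{0,…,n-1}` into `ℕ \ X`) is closed in `I₂`, but not
compact in `I₂`: when `U` is nonempty and infinite, the open cover consisting of the sets
`{f : (n,m) ∈ f}` for `m ∈ ℕ` together with `{f : n ∉ dom f}` has no finite subcover. -/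
theorem basic_open_closed_not_compact (n : ℕ) (X : Finset ℕ)
    (h0 : Set (ℕ × ℕ)) (hh0 : IsPInj h0)
    (hdom : ∀ p ∈ h0, (p : ℕ × ℕ).1 < n) (him : ∀ p ∈ h0, (p : ℕ × ℕ).2 ∉ X) :
    @IsClosed PB I2 {f : PB | pres f.1 n = h0 ∧ pim f.1 ∩ ↑X = ∅} ∧
    ({f : PB | pres f.1 n = h0 ∧ pim f.1 ∩ ↑X = ∅}.Nonempty →
     {f : PB | pres f.1 n = h0 ∧ pim f.1 ∩ ↑X = ∅}.Infinite →
      (¬ @IsCompact PB I2 {f : PB | pres f.1 n = h0 ∧ pim f.1 ∩ ↑X = ∅} ∧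
       ∀ M : Finset ℕ,
        ¬ ({f : PB | pres f.1 n = h0 ∧ pim f.1 ∩ ↑X = ∅} ⊆
            (⋃ m ∈ M, {f : PB | (n, m) ∈ f.1}) ∪ {f : PB | n ∉ pdom f.1}))) := by
  have not_subset (M : Finset ℕ) : ¬ basicI4 n X h0 ⊆ (⋃ m ∈ M, Uxy n m) ∪ Wlow n := fun hM =>
    let ⟨_, hf, hfM⟩ := exists_mem_basicI4_notMem hh0 hdom him M
    hfM (hM hf)
  refine ⟨isClosed_basicI4 n X h0, fun _ _ => ⟨fun hK => ?_, not_subset⟩⟩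
  obtain ⟨M, hM⟩ := exists_finset_subset_biUnion_Uxy_union_Wlow hK n
  exact not_subset M hM
end
end

section
/- The poset of waning functions ordered by f ⪯ g iff f(i) ≥ g(i) for all i ∈ ω+1 has no infinite strictly ascending chain. -/
open Set Classical

noncomputable section

/-!
Read pointwise, an ascending chain of waning functions is a strictly decreasing sequence
`F 0 > F 1 > ⋯` in `ℕ∞ → ℕ∞`. Since `F 1 < F 0`, `F 1` is not constantly `ω`, so it takes a
finite value `m` at some `a`; being waning it then strictly decreases until it reaches `0`, hence
vanishes from `a + m` on, and so do all later `F k`. These are thus determined by their values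
below a fixed `M`, i.e. they form a strictly decreasing sequence in the well-founded finite
product `ℕ∞ ^ M`, which is impossible.
-/

theorem Set.Finite.not_strictAnti_of_eqOn_compl {ι α : Type*} [PartialOrder α] [WellFoundedLT α]
    {s : Set ι} (hs : s.Finite) {g : ι → α} {F : ℕ → ι → α} (hg : ∀ k, EqOn (F k) g sᶜ) :
    ¬ StrictAnti F := fun hF => by
  have := hs.to_subtype
  refine not_strictAnti_of_wellFoundedLT (fun k => s.domRestrict (F k)) fun k l hkl => ?_
  refine lt_of_le_of_ne (fun i => (hF hkl).le i) fun heq => (hF hkl).ne ?_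
  funext i
  by_cases hi : i ∈ s
  · exact congrFun heq ⟨i, hi⟩
  · exact (hg l hi).trans (hg k hi).symm

theorem ENat.finite_Iio_natCast (M : ℕ) : (Iio (M : ℕ∞)).Finite :=
  ENat.finite_of_sSup_lt_top <| (sSup_le fun _ hi => le_of_lt hi).trans_lt (ENat.natCast_lt_top M)

namespace Waning

variable {f : ℕ∞ → ℕ∞}

theorem apply_succ_lt (hf : Waning f) {j : ℕ} (h0 : f j ≠ 0) (htop : f j ≠ ⊤) :
    f (j + 1 : ℕ) < f j := by
  obtain ⟨-, hconst | ⟨-, hstep⟩⟩ := hf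
  · exact absurd (hconst j) htop
  · exact hstep j h0 htop

theorem apply_add_eq_zero (hf : Waning f) {a n : ℕ} (h : f a ≤ n) : f (a + n : ℕ) = 0 := by
  induction n generalizing a with
  | zero => simpa using h
  | succ n ih =>
    by_cases h0 : f a = 0
    · exact nonpos_iff_eq_zero.mp (h0 ▸ hf.1 (by exact_mod_cast Nat.le_add_right a (n + 1)))
    · have hlt := hf.apply_succ_lt h0 (ne_top_of_le_ne_top (ENat.natCast_ne_top _) h)
      have := ih (Order.le_of_lt_add_one (hlt.trans_le (by exact_mod_cast h)))
      rwa [Nat.add_right_comm, Nat.add_assoc] at this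

theorem exists_eq_zero_of_ne_top (hf : Waning f) (htop : f ≠ ⊤) :
    ∃ M : ℕ, ∀ i, (M : ℕ∞) ≤ i → f i = 0 := by
  obtain hconst | ⟨⟨a, ha⟩, -⟩ := hf.2
  · exact absurd (funext hconst) htop
  · refine ⟨a + (f a).toNat, fun i hi => nonpos_iff_eq_zero.mp ?_⟩
    calc f i ≤ f (a + (f a).toNat : ℕ) := hf.1 hi
      _ = 0 := hf.apply_add_eq_zero (ENat.natCast_toNat ha).ge

end Waning

/-- The poset of waning functions ordered by `f ⪯ g ↔ ∀ i, f(i) ≥ g(i)` has no infinite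
strictly ascending chain. -/
theorem no_infinite_ascending_chain :
    ¬ ∃ F : ℕ → (ℕ∞ → ℕ∞),
        (∀ k, Waning (F k)) ∧
        ∀ k, (∀ i, F (k + 1) i ≤ F k i) ∧ F k ≠ F (k + 1) := by
  rintro ⟨F, hW, hF⟩
  have hanti : StrictAnti F :=
    strictAnti_nat_of_succ_lt fun k => lt_of_le_of_ne (hF k).1 (hF k).2.symm
  obtain ⟨M, hM⟩ := (hW 1).exists_eq_zero_of_ne_top (hanti zero_lt_one).ne_top
  have hzero : ∀ k, EqOn (F (k + 1)) 0 (Iio (M : ℕ∞))ᶜ := fun k i hi =>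
    nonpos_iff_eq_zero.mp (hM i (not_lt.mp hi) ▸ hanti.antitone (Nat.le_add_left 1 k) i)
  exact (ENat.finite_Iio_natCast M).not_strictAnti_of_eqOn_compl hzero
    (hanti.comp_strictMono fun _ _ h => Nat.add_lt_add_right h 1)
end
end

section
/- Fix n ∈ ℕ, a finite set X ⊆ ℕ, and a partial injection g on ℕ with |im(g) \ X| ≥ n and |X ∩ im(g)| > f(n) for a function f : ω+1 → ω+1 with f(n) finite. Then the set W_g = {h ∈ I_ℕ : h agrees with g on the preimage (im(g) ∩ X)g^{-1}} is an open neighbourhood of g in the topology I₂ which is disjoint from U_{f,n,X} = {h : |im(h) \ X| ≥ n and |X ∩ im(h)| ≤ f(n)}. -/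
open Set Classical

noncomputable section

/-- If `|im(g) \ X| ≥ n` and `|X ∩ im(g)| > f(n)` (with `f(n)` finite), then the set
`W_g` of partial bijections agreeing with `g` on `(im(g) ∩ X)g⁻¹` is an open
neighbourhood of `g` in `I₂` disjoint from `U_{f,n,X}`. -/
theorem Wg_open_nbhd_disjoint (f : ℕ∞ → ℕ∞) (n : ℕ) (X : Finset ℕ) (g : PB)
    (hfn : f n ≠ ⊤)
    (h1 : (n : ℕ∞) ≤ (pim g.1 \ ↑X).encard)
    (h2 : f n < ((↑X : Set ℕ) ∩ pim g.1).encard) :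
    g ∈ {h : PB | ∀ p ∈ g.1, (p : ℕ × ℕ).2 ∈ X → p ∈ h.1} ∧
    @IsOpen PB I2 {h : PB | ∀ p ∈ g.1, (p : ℕ × ℕ).2 ∈ X → p ∈ h.1} ∧
    Disjoint {h : PB | ∀ p ∈ g.1, (p : ℕ × ℕ).2 ∈ X → p ∈ h.1} (UfnX f n X) := by
  classical
  letI : TopologicalSpace PB := I2
  refine ⟨fun p hp _ => hp, ?_, ?_⟩
  · have hfin : {p | p ∈ g.1 ∧ p.2 ∈ X}.Finite := by
      apply Set.Finite.of_finite_image (f := Prod.snd)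
      · exact (X.finite_toSet).subset (by rintro y ⟨p, ⟨_, hX⟩, rfl⟩; exact hX)
      · rintro p ⟨hp, _⟩ q ⟨hq, _⟩ h
        exact Prod.ext ((g.2 hp hq).mpr h) h
    have heq : {h : PB | ∀ p ∈ g.1, (p : ℕ × ℕ).2 ∈ X → p ∈ h.1}
        = ⋂ p ∈ {p | p ∈ g.1 ∧ p.2 ∈ X}, Uxy p.1 p.2 := by
      ext h
      simp only [Set.mem_setOf_eq, Set.mem_iInter, Uxy]
      constructor
      · rintro H p ⟨hp, hX⟩; exact H p hp hX
      · intro H p hp hX; exact H p ⟨hp, hX⟩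
    rw [heq]
    exact hfin.isOpen_biInter (fun p _ =>
      TopologicalSpace.GenerateOpen.basic _ (Or.inl ⟨p.1, p.2, rfl⟩))
  · rw [Set.disjoint_left]
    rintro h hW ⟨_, hle⟩
    have hsub : (↑X : Set ℕ) ∩ pim g.1 ⊆ (↑X : Set ℕ) ∩ pim h.1 := by
      rintro y ⟨hyX, x, hxy⟩
      exact ⟨hyX, x, hW (x, y) hxy hyX⟩
    exact absurd (h2.trans_le ((Set.encard_mono hsub).trans hle)) (lt_irrefl _)
end
end

section
/- Let f and g be waning functions and let n ∈ ℕ with f(n) < g(n). Let id_n be the identity on {0,…,n−1}, choose b with f(n) < b − n ≤ g(n), and choose r > b. Then the partial bijection h = id_n ∪ {(r+i, n+i) : 0 ≤ i < b−n} satisfies h↾e r = id_n↾e r and |im(h) ∩ (b \ im(id_n))| = |im(h) ∩ (r \ im(id_n))| = b − n; hence h ∈ W_{g,id_n,r} but h ∉ W_{f,id_n,b}. -/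
open Set Classical

noncomputable section

/-- For waning `f, g` with `f(n) < g(n)`, choosing `b` with `f(n) < b − n ≤ g(n)` and
`r > b`, the partial bijection `h = id_n ∪ {(r+i, n+i) : 0 ≤ i < b−n}` satisfies
`h↾r = id_n↾r` and `|im(h) ∩ (b \ im(id_n))| = |im(h) ∩ (r \ im(id_n))| = b − n`; hence
`h ∈ W_{g, id_n, r}` but `h ∉ W_{f, id_n, b}`. -/
theorem separating_element (f g : ℕ∞ → ℕ∞) (hf : Waning f) (hg : Waning g)
    (n b r : ℕ) (h1 : f n < g n)
    (h2 : f n < ((b - n : ℕ) : ℕ∞)) (h3 : ((b - n : ℕ) : ℕ∞) ≤ g n) (h4 : b < r) :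
    IsPInj ({p : ℕ × ℕ | p.1 = p.2 ∧ p.1 < n} ∪
      {p : ℕ × ℕ | ∃ i : ℕ, i < b - n ∧ p = (r + i, n + i)}) ∧
    pres ({p : ℕ × ℕ | p.1 = p.2 ∧ p.1 < n} ∪
      {p : ℕ × ℕ | ∃ i : ℕ, i < b - n ∧ p = (r + i, n + i)}) r =
      pres {p : ℕ × ℕ | p.1 = p.2 ∧ p.1 < n} r ∧
    (pim ({p : ℕ × ℕ | p.1 = p.2 ∧ p.1 < n} ∪
        {p : ℕ × ℕ | ∃ i : ℕ, i < b - n ∧ p = (r + i, n + i)}) ∩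
      ({y | y < b} \ pim {p : ℕ × ℕ | p.1 = p.2 ∧ p.1 < n})).encard = ((b - n : ℕ) : ℕ∞) ∧
    (pim ({p : ℕ × ℕ | p.1 = p.2 ∧ p.1 < n} ∪
        {p : ℕ × ℕ | ∃ i : ℕ, i < b - n ∧ p = (r + i, n + i)}) ∩
      ({y | y < r} \ pim {p : ℕ × ℕ | p.1 = p.2 ∧ p.1 < n})).encard = ((b - n : ℕ) : ℕ∞) ∧
    ({p : ℕ × ℕ | p.1 = p.2 ∧ p.1 < n} ∪
      {p : ℕ × ℕ | ∃ i : ℕ, i < b - n ∧ p = (r + i, n + i)})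
        ∈ Wset g {p : ℕ × ℕ | p.1 = p.2 ∧ p.1 < n} r ∧
    ({p : ℕ × ℕ | p.1 = p.2 ∧ p.1 < n} ∪
      {p : ℕ × ℕ | ∃ i : ℕ, i < b - n ∧ p = (r + i, n + i)})
        ∉ Wset f {p : ℕ × ℕ | p.1 = p.2 ∧ p.1 < n} b := by
  set idn : Set (ℕ × ℕ) := {p : ℕ × ℕ | p.1 = p.2 ∧ p.1 < n} with hidn
  set T : Set (ℕ × ℕ) := {p : ℕ × ℕ | ∃ i : ℕ, i < b - n ∧ p = (r + i, n + i)} with hT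
  have hbn : 0 < b - n := by
    rcases Nat.eq_zero_or_pos (b - n) with h | h
    · rw [h] at h2; simp at h2
    · exact h
  have hnb : n < b := by omega
  -- image of idn
  have him_idn : pim idn = Set.Iio n := by
    ext y
    constructor
    · rintro ⟨x, hx1, hx2⟩; simp at hx1 ⊢; omega
    · intro hy; exact ⟨y, rfl, hy⟩
  -- image of the union
  have him : pim (idn ∪ T) = Set.Iio b := by
    ext y
    constructor
    · rintro ⟨x, hx | ⟨i, hi, heq⟩⟩
      · obtain ⟨h5, h6⟩ := hx; simp; omega
      · rw [Prod.ext_iff] at heq; simp at heq ⊢; omega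
    · intro hy
      simp only [Set.mem_Iio] at hy
      by_cases hyn : y < n
      · exact ⟨y, Or.inl ⟨rfl, hyn⟩⟩
      · refine ⟨r + (y - n), Or.inr ⟨y - n, by omega, ?_⟩⟩
        rw [Prod.ext_iff]; constructor <;> simp <;> omega
  -- injectivity
  have hinj : IsPInj (idn ∪ T) := by
    rintro x y z w (⟨hx1, hx2⟩ | ⟨i, hi, hpi⟩) (⟨hz1, hz2⟩ | ⟨j, hj, hpj⟩)
    · simp at hx1 hz1; omega
    · simp at hx1; rw [Prod.ext_iff] at hpj; simp at hpj; omega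
    · simp at hz1; rw [Prod.ext_iff] at hpi; simp at hpi; omega
    · rw [Prod.ext_iff] at hpi hpj; simp at hpi hpj; omega
  -- restriction
  have hpres : pres (idn ∪ T) r = pres idn r := by
    ext p
    constructor
    · rintro ⟨hp | ⟨i, hi, hpi⟩, hlt⟩
      · exact ⟨hp, hlt⟩
      · rw [Prod.ext_iff] at hpi; simp at hpi; omega
    · rintro ⟨hp, hlt⟩; exact ⟨Or.inl hp, hlt⟩
  -- the two intersections equal Ico n b
  have hset : ∀ m : ℕ, b ≤ m →
      pim (idn ∪ T) ∩ ({y | y < m} \ pim idn) = ↑(Finset.Ico n b) := by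
    intro m hm
    rw [him, him_idn]
    ext y
    simp only [Set.mem_inter_iff, Set.mem_Iio, Set.mem_diff, Set.mem_setOf_eq,
      Finset.coe_Ico, Set.mem_Ico]
    omega
  have hcard : ∀ m : ℕ, b ≤ m →
      (pim (idn ∪ T) ∩ ({y | y < m} \ pim idn)).encard = ((b - n : ℕ) : ℕ∞) := by
    intro m hm
    rw [hset m hm, Set.encard_coe_eq_coe_finsetCard, Nat.card_Ico]
  -- encard of idn
  have hencard_idn : idn.encard = (n : ℕ∞) := by
    have : idn = (fun i : ℕ => (i, i)) '' Set.Iio n := by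
      ext ⟨x, y⟩
      simp only [hidn, Set.mem_setOf_eq, Set.mem_image, Set.mem_Iio, Prod.ext_iff]
      constructor
      · rintro ⟨h5, h6⟩; exact ⟨x, h6, rfl, h5⟩
      · rintro ⟨i, hi, rfl, rfl⟩; exact ⟨rfl, hi⟩
    rw [this, Set.InjOn.encard_image (fun a _ c _ h => (Prod.ext_iff.mp h).1)]
    rw [← Finset.coe_range, Set.encard_coe_eq_coe_finsetCard, Finset.card_range]
  refine ⟨hinj, hpres, hcard b le_rfl, hcard r (le_of_lt h4), ?_, ?_⟩
  · refine ⟨hinj, hpres, ?_⟩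
    rw [hcard r (le_of_lt h4), hencard_idn]
    exact h3
  · rintro ⟨-, -, hle⟩
    rw [hcard b le_rfl, hencard_idn] at hle
    exact absurd hle (not_le.mpr h2)
end
end

section
/- Let r ∈ ℕ, l < r, and let G_r be the group of permutations of ℕ supported on {0,…,r−1}. Then for any set I of partial injections on ℕ closed under right composition with elements of G_r: {f ∈ I : |im(f) ∩ r| ≤ l} = ⋂_{σ ∈ G_r} {f ∈ I : im(fσ) ⊉ {0,…,l}} = ⋂_{σ ∈ G_r} ({f ∈ I : im(f) ⊉ {0,…,l}} σ^{-1}). -/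
open Set Classical

noncomputable section

/-- Right composition of a partial injection with a permutation of `ℕ`. -/
def pcp (f : Set (ℕ × ℕ)) (σ : Equiv.Perm ℕ) : Set (ℕ × ℕ) :=
  (fun p : ℕ × ℕ => (p.1, σ p.2)) '' f

/-! The image of `f` meets `r` in at most `l` points iff no permutation `σ` supported on `r`
makes `{0,…,l}` part of the image of `fσ`: such a `σ` pulls `{0,…,l}` back to `l + 1` points of
`im f ∩ r`, and conversely any `l + 1` points of `im f ∩ r` are sent onto `{0,…,l}` by some
permutation of `r`. The second equality holds because `f ↦ fσ⁻¹` maps `I` onto itself with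
inverse `f ↦ fσ`. -/

section PermSupportedIn

variable {α : Type*} {U : Set α}

theorem Equiv.Perm.symm_apply_mem_of_fixes_compl {σ : Equiv.Perm α} (hσ : ∀ x ∉ U, σ x = x)
    {y : α} (hy : y ∈ U) : σ.symm y ∈ U := by
  by_contra h
  have := hσ _ h
  rw [Equiv.apply_symm_apply] at this
  exact h (this ▸ hy)

theorem Equiv.Perm.exists_fixes_compl_image_eq {S T : Set α} (hU : U.Finite) (hS : S ⊆ U)
    (hT : T ⊆ U) (hST : S.encard = T.encard) :
    ∃ σ : Equiv.Perm α, (∀ x ∉ U, σ x = x) ∧ σ '' S = T := by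
  have : Finite U := hU
  let S' : Set U := (↑) ⁻¹' S
  let T' : Set U := (↑) ⁻¹' T
  have hcard : Nat.card S' = Nat.card T' := by
    rw [Nat.card_coe_set_eq, Nat.card_coe_set_eq,
      ncard_preimage_of_injective_subset_range Subtype.val_injective (by simpa using hS),
      ncard_preimage_of_injective_subset_range Subtype.val_injective (by simpa using hT),
      ncard, ncard, hST]
  obtain ⟨e⟩ := Finite.card_eq.mp hcard
  let σ := Equiv.Perm.ofSubtype (e.extendSubtype)
  have hmaps : MapsTo σ S T := fun x hx => by
    have hxU : x ∈ U := hS hx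
    rw [Equiv.Perm.ofSubtype_apply_of_mem _ hxU,
      Equiv.extendSubtype_apply_of_mem e ⟨x, hxU⟩ hx]
    exact (e ⟨⟨x, hxU⟩, hx⟩).2
  refine ⟨σ, fun x hx => Equiv.Perm.ofSubtype_apply_of_not_mem _ hx, ?_⟩
  refine (hU.subset hT |>.subset hmaps.image_subset).eq_of_subset_of_encard_le
    hmaps.image_subset ?_
  rw [σ.injective.encard_image, hST]

theorem Set.encard_inter_lt_iff_forall_not_subset_image {A T : Set α} (hU : U.Finite)
    (hT : T ⊆ U) :
    (A ∩ U).encard < T.encard ↔ ∀ σ : Equiv.Perm α, (∀ x ∉ U, σ x = x) → ¬ T ⊆ σ '' A := by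
  constructor
  · intro hlt σ hσ hTA
    have hsub : σ.symm '' T ⊆ A ∩ U := by
      rintro _ ⟨y, hy, rfl⟩
      obtain ⟨x, hx, rfl⟩ := hTA hy
      exact ⟨by simpa using hx, by simpa using σ.symm_apply_mem_of_fixes_compl hσ (hT hy)⟩
    have := encard_mono hsub
    rw [σ.symm.injective.encard_image] at this
    exact (this.trans_lt hlt).false
  · intro h
    by_contra! hle
    obtain ⟨S, hSA, hST⟩ := exists_subset_encard_eq hle
    obtain ⟨σ, hσ, rfl⟩ :=
      Equiv.Perm.exists_fixes_compl_image_eq hU (hSA.trans inter_subset_right) hT hST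
    exact h σ hσ (image_mono (hSA.trans inter_subset_left))

end PermSupportedIn

theorem encard_inter_Iio_le_iff {A : Set ℕ} {l r : ℕ} (hlr : l < r) :
    (A ∩ Iio r).encard ≤ l ↔ ∀ σ : Equiv.Perm ℕ, (∀ x, r ≤ x → σ x = x) → ¬ Iic l ⊆ σ '' A := by
  have hIic : (Iic l).encard = l + 1 := by
    rw [← (finite_Iic l).cast_ncard_eq, ncard_Iic_nat, Nat.cast_succ]
  rw [← ENat.lt_add_one_iff (ENat.natCast_ne_top l), ← hIic,
    encard_inter_lt_iff_forall_not_subset_image (finite_Iio r) (Iic_subset_Iio.mpr hlr)]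
  simp only [mem_Iio, not_lt]

theorem pim_pcp (f : Set (ℕ × ℕ)) (σ : Equiv.Perm ℕ) : pim (pcp f σ) = σ '' pim f := by
  ext y
  constructor
  · rintro ⟨x, ⟨a, b⟩, hab, hxy⟩
    exact ⟨b, ⟨a, hab⟩, (Prod.ext_iff.mp hxy).2⟩
  · rintro ⟨b, ⟨a, hab⟩, rfl⟩
    exact ⟨a, (a, b), hab, rfl⟩

theorem pcp_pcp (f : Set (ℕ × ℕ)) (σ τ : Equiv.Perm ℕ) :
    pcp (pcp f σ) τ = pcp f (σ.trans τ) := by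
  simp only [pcp, image_image]
  rfl

theorem pcp_refl (f : Set (ℕ × ℕ)) : pcp f (Equiv.refl ℕ) = f := by
  simp [pcp]

theorem pcp_pcp_symm (f : Set (ℕ × ℕ)) (σ : Equiv.Perm ℕ) : pcp (pcp f σ) σ.symm = f := by
  rw [pcp_pcp, Equiv.self_trans_symm, pcp_refl]

theorem pcp_symm_pcp (f : Set (ℕ × ℕ)) (σ : Equiv.Perm ℕ) : pcp (pcp f σ.symm) σ = f := by
  rw [pcp_pcp, Equiv.symm_trans_self, pcp_refl]

theorem pcp_mem_iff {r : ℕ} {I : Set (Set (ℕ × ℕ))}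
    (hI : ∀ f ∈ I, ∀ σ : Equiv.Perm ℕ, (∀ x, r ≤ x → σ x = x) → pcp f σ ∈ I)
    {σ : Equiv.Perm ℕ} (hσ : ∀ x, r ≤ x → σ x = x) {f : Set (ℕ × ℕ)} :
    pcp f σ ∈ I ↔ f ∈ I := by
  refine ⟨fun h => ?_, fun h => hI f h σ hσ⟩
  rw [← pcp_pcp_symm f σ]
  exact hI _ h σ.symm fun x hx => σ.symm_apply_eq.mpr (hσ x hx).symm

theorem inter_description_general (r l : ℕ) (hlr : l < r) (I : Set (Set (ℕ × ℕ)))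
    (hI : ∀ f ∈ I, ∀ σ : Equiv.Perm ℕ, (∀ x, r ≤ x → σ x = x) → pcp f σ ∈ I) :
    ({f ∈ I | (pim f ∩ {y | y < r}).encard ≤ (l : ℕ∞)} =
      ⋂ σ ∈ {σ : Equiv.Perm ℕ | ∀ x, r ≤ x → σ x = x},
        {f ∈ I | ¬ ∀ y ≤ l, y ∈ pim (pcp f σ)}) ∧
    ((⋂ σ ∈ {σ : Equiv.Perm ℕ | ∀ x, r ≤ x → σ x = x},
        {f ∈ I | ¬ ∀ y ≤ l, y ∈ pim (pcp f σ)}) =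
      ⋂ σ ∈ {σ : Equiv.Perm ℕ | ∀ x, r ≤ x → σ x = x},
        (fun f => pcp f σ.symm) '' {f ∈ I | ¬ ∀ y ≤ l, y ∈ pim f}) := by
  constructor
  · ext f
    simp only [mem_iInter, mem_ofPred_eq, pim_pcp]
    constructor
    · rintro ⟨hf, hcard⟩ σ hσ
      exact ⟨hf, (encard_inter_Iio_le_iff hlr).mp hcard σ hσ⟩
    · intro h
      exact ⟨(h 1 fun _ _ => rfl).1, (encard_inter_Iio_le_iff hlr).mpr fun σ hσ => (h σ hσ).2⟩
  · refine iInter₂_congr fun σ hσ => ?_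
    rw [image_eq_preimage_of_inverse (pcp_symm_pcp · σ) (pcp_pcp_symm · σ)]
    ext f
    exact and_congr_left' (pcp_mem_iff hI hσ).symm

/-- For `l < r` and `G_r` the permutations supported on `{0,…,r−1}`, for any set `I` of
partial injections closed under right composition with elements of `G_r`:
`{f ∈ I : |im(f) ∩ r| ≤ l} = ⋂_{σ ∈ G_r} {f ∈ I : im(fσ) ⊉ {0,…,l}}
= ⋂_{σ ∈ G_r} ({f ∈ I : im(f) ⊉ {0,…,l}} σ⁻¹)`. -/
theorem inter_description (r l : ℕ) (hlr : l < r) (I : Set (Set (ℕ × ℕ)))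
    (hIp : ∀ f ∈ I, IsPInj f)
    (hI : ∀ f ∈ I, ∀ σ : Equiv.Perm ℕ, (∀ x, r ≤ x → σ x = x) → pcp f σ ∈ I) :
    ({f ∈ I | (pim f ∩ {y | y < r}).encard ≤ (l : ℕ∞)} =
      ⋂ σ ∈ {σ : Equiv.Perm ℕ | ∀ x, r ≤ x → σ x = x},
        {f ∈ I | ¬ ∀ y ≤ l, y ∈ pim (pcp f σ)}) ∧
    ((⋂ σ ∈ {σ : Equiv.Perm ℕ | ∀ x, r ≤ x → σ x = x},
        {f ∈ I | ¬ ∀ y ≤ l, y ∈ pim (pcp f σ)}) =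
      ⋂ σ ∈ {σ : Equiv.Perm ℕ | ∀ x, r ≤ x → σ x = x},
        (fun f => pcp f σ.symm) '' {f ∈ I | ¬ ∀ y ≤ l, y ∈ pim f}) :=
  inter_description_general r l hlr I hI
end
end

section
/- Let n ∈ ℕ, g' a finite partial injection on ℕ, and m > max({n} ∪ dom(g') ∪ im(g')) with g'↾n defined. For every partial injection h with h↾n = g'↾n, writing h₁ = h↾n and h₂ = h \ h₁, and choosing an injective function l : im(h₂) → ℕ \ {0,…,m−1}, we have h = (id_n ∪ h₂l) ∘ (g' ∪ l^{-1}), where id_n is the identity on {0,…,n−1}. Consequently U_{n,g'} := {h : h↾n = g'↾n} ⊆ (↑id_n) · U_{m,g'}, where ↑id_n = {f : id_n ⊆ f} and U_{m,g'} = {f : f↾m = g'↾m}. -/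
/-!
Below `n`, `h` agrees with `g'`, so the identity on `{0, …, n-1}` followed by any `b` with
`b↾m = g'↾m` reproduces it. Above `n`, send `x` to a label `r (h x)` and let `b` send the label
back to `h x`; the composite is `h` as soon as each label has `h x` as its only `b`-image. For `b`
to be a partial injection extending `g'↾m`, a point of `im g'` must be labelled by its
`g'`-preimage, the remaining points take the fresh labels `y + m`, and injectivity of `h` keeps all
these labels `≥ n`, away from `id_n`.
-/

open Set Classical

noncomputable section

def pid (n : ℕ) : Set (ℕ × ℕ) := {p | p.1 = p.2 ∧ p.1 < n}

lemma isPInj_pid (n : ℕ) : IsPInj (pid n) := by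
  rintro a b c d ⟨hab, -⟩ ⟨hcd, -⟩
  rw [show a = b from hab, show c = d from hcd]

section Restriction

variable {g k : Set (ℕ × ℕ)} {n m : ℕ}

lemma mem_sdiff_pres {p : ℕ × ℕ} : p ∈ g \ pres g n ↔ p ∈ g ∧ n ≤ p.1 := by
  simp [pres]

lemma pres_pres_of_le_s19 (hnm : n ≤ m) : pres (pres g m) n = pres g n := by
  ext p
  simp only [pres, mem_ofPred_eq]
  constructor
  · rintro ⟨⟨hp, -⟩, hpn⟩
    exact ⟨hp, hpn⟩
  · rintro ⟨hp, hpn⟩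
    exact ⟨⟨hp, by omega⟩, hpn⟩

lemma pres_union_of_le (hk : ∀ p ∈ k, n ≤ p.1) : pres (g ∪ k) n = pres g n := by
  ext p
  simp only [pres, mem_union, mem_ofPred_eq]
  constructor
  · rintro ⟨hp | hp, hpn⟩
    · exact ⟨hp, hpn⟩
    · exact absurd (hk p hp) (not_le.2 hpn)
  · rintro ⟨hp, hpn⟩
    exact ⟨Or.inl hp, hpn⟩

end Restriction

namespace IsPInj

variable {g k : Set (ℕ × ℕ)}

lemma mono (hg : IsPInj g) (hk : k ⊆ g) : IsPInj k :=
  fun _ _ _ _ hab hcd => hg (hk hab) (hk hcd)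

lemma union_s19 (hg : IsPInj g) (hk : IsPInj k) (hdom : Disjoint (pdom g) (pdom k))
    (him : Disjoint (pim g) (pim k)) : IsPInj (g ∪ k) := by
  rintro a b c d (hab | hab) (hcd | hcd)
  · exact hg hab hcd
  · exact iff_of_false (hdom.ne_of_mem ⟨b, hab⟩ ⟨d, hcd⟩) (him.ne_of_mem ⟨a, hab⟩ ⟨c, hcd⟩)
  · exact iff_of_false (hdom.ne_of_mem ⟨d, hcd⟩ ⟨b, hab⟩).symm
      (him.ne_of_mem ⟨c, hcd⟩ ⟨a, hab⟩).symm
  · exact hk hab hcd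

lemma image_relabel (hg : IsPInj g) {r : ℕ → ℕ} (hr : InjOn r (pim g)) :
    IsPInj ((fun p : ℕ × ℕ => (p.1, r p.2)) '' g) := by
  rintro _ _ _ _ ⟨⟨a, b⟩, hab, he⟩ ⟨⟨c, d⟩, hcd, he'⟩
  obtain ⟨rfl, rfl⟩ := Prod.mk.inj he
  obtain ⟨rfl, rfl⟩ := Prod.mk.inj he'
  rw [hg hab hcd]
  exact ⟨congrArg r, fun e => hr ⟨a, hab⟩ ⟨c, hcd⟩ e⟩

end IsPInj

section Factorization

variable {g' h b : Set (ℕ × ℕ)} {n m : ℕ}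

theorem eq_pcomp_of_relabel {r : ℕ → ℕ} (hres : pres b n = pres h n)
    (hr : ∀ y ∈ pim (h \ pres h n), (r y, y) ∈ b)
    (hr_unique : ∀ y ∈ pim (h \ pres h n), ∀ z, (r y, z) ∈ b → z = y) :
    h = pcomp (pid n ∪ (fun p : ℕ × ℕ => (p.1, r p.2)) '' (h \ pres h n)) b := by
  ext ⟨x, z⟩
  constructor
  · intro hxz
    by_cases hx : x < n
    · have hb : (x, z) ∈ pres b n := hres ▸ ⟨hxz, hx⟩
      exact ⟨x, Or.inl ⟨rfl, hx⟩, hb.1⟩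
    · have hh₂ : (x, z) ∈ h \ pres h n := mem_sdiff_pres.2 ⟨hxz, not_lt.1 hx⟩
      exact ⟨r z, Or.inr ⟨(x, z), hh₂, rfl⟩, hr z ⟨x, hh₂⟩⟩
  · rintro ⟨c, ⟨hxc, hx⟩ | ⟨⟨x', y⟩, hh₂, he⟩, hcz⟩
    · dsimp only at hxc hx
      subst hxc
      have hh : (x, z) ∈ pres h n := hres ▸ ⟨hcz, hx⟩
      exact hh.1
    · obtain ⟨rfl, rfl⟩ := Prod.mk.inj he
      rw [hr_unique y ⟨x', hh₂⟩ z hcz]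
      exact hh₂.1

theorem eq_pcomp_union_inverse (hnm : n < m) (hm : ∀ p ∈ g', p.1 < m)
    (hres : pres h n = pres g' n) {l : ℕ → ℕ} (hl : InjOn l (pim (h \ pres h n)))
    (hlm : ∀ y ∈ pim (h \ pres h n), m ≤ l y) :
    h = pcomp (pid n ∪ (fun p : ℕ × ℕ => (p.1, l p.2)) '' (h \ pres h n))
      (g' ∪ (fun y : ℕ => (l y, y)) '' pim (h \ pres h n)) := by
  refine eq_pcomp_of_relabel ((pres_union_of_le ?_).trans hres.symm)
    (fun y hy => Or.inr ⟨y, hy, rfl⟩) ?_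
  · rintro _ ⟨y, hy, he⟩
    rw [← he]
    exact hnm.le.trans (hlm y hy)
  · rintro y hy z (hg' | ⟨y', hy', he⟩)
    · exact absurd (hm _ hg') (not_lt.2 (hlm y hy))
    · obtain ⟨hly, rfl⟩ := Prod.mk.inj he
      exact hl hy' hy hly

lemma exists_isPInj_pres_eq_superset_pim (hg' : IsPInj g') (hm : ∀ p ∈ g', p.1 < m)
    (S : Set ℕ) : ∃ b, IsPInj b ∧ pres b m = pres g' m ∧ S ⊆ pim b := by
  refine ⟨g' ∪ (fun y : ℕ => (y + m, y)) '' (S \ pim g'), hg'.union_s19 ?_ ?_ ?_,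
    pres_union_of_le ?_, ?_⟩
  · rintro _ _ _ _ ⟨y, -, he⟩ ⟨y', -, he'⟩
    obtain ⟨rfl, rfl⟩ := Prod.mk.inj he
    obtain ⟨rfl, rfl⟩ := Prod.mk.inj he'
    exact ⟨fun e => by omega, fun e => by omega⟩
  · rw [disjoint_left]
    rintro x ⟨_, hx⟩ ⟨_, y, -, he⟩
    have := hm _ hx
    obtain ⟨rfl, -⟩ := Prod.mk.inj he
    omega
  · rw [disjoint_left]
    rintro y hy ⟨_, y', hy', he⟩
    obtain ⟨-, rfl⟩ := Prod.mk.inj he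
    exact hy'.2 hy
  · rintro _ ⟨y, -, he⟩
    rw [← he]
    exact Nat.le_add_left m y
  · intro y hy
    by_cases hyg : y ∈ pim g'
    · obtain ⟨x, hx⟩ := hyg
      exact ⟨x, Or.inl hx⟩
    · exact ⟨y + m, Or.inr ⟨y, ⟨hy, hyg⟩, rfl⟩⟩

theorem exists_pcomp_eq_of_pres_eq (hg' : IsPInj g') (hnm : n ≤ m) (hm : ∀ p ∈ g', p.1 < m)
    (hh : IsPInj h) (hres : pres h n = pres g' n) :
    ∃ a b : Set (ℕ × ℕ), IsPInj a ∧ pid n ⊆ a ∧ IsPInj b ∧ pres b m = pres g' m ∧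
      h = pcomp a b := by
  set S := pim (h \ pres h n)
  obtain ⟨b, hb, hbm, hSb⟩ := exists_isPInj_pres_eq_superset_pim hg' hm S
  choose! r hr using fun y (hy : y ∈ S) => hSb hy
  have hbn : pres b n = pres h n := by
    rw [hres, ← pres_pres_of_le_s19 hnm, hbm, pres_pres_of_le_s19 hnm]
  have hr_unique : ∀ y ∈ S, ∀ z, (r y, z) ∈ b → z = y :=
    fun y hy _ hz => (hb hz (hr y hy)).1 rfl
  have hr_inj : InjOn r S := fun y hy y' hy' e => (hb (hr y hy) (hr y' hy')).1 e
  -- a label below `n` would be an `h`-preimage of `y` below `n`, contradicting injectivity of `h`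
  have hr_ge : ∀ y ∈ S, n ≤ r y := by
    rintro y ⟨x, hxy⟩
    by_contra! hlt
    have hry : (r y, y) ∈ pres h n := hbn ▸ ⟨hr y ⟨x, hxy⟩, hlt⟩
    have hxr : r y = x := (hh hry.1 hxy.1).2 rfl
    exact absurd (mem_sdiff_pres.1 hxy).2 (hxr ▸ not_le.2 hlt)
  refine ⟨_, b, (isPInj_pid n).union_s19 ((hh.mono sdiff_subset).image_relabel hr_inj) ?_ ?_,
    subset_union_left, hb, hbm, eq_pcomp_of_relabel hbn hr hr_unique⟩
  · rw [disjoint_left]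
    rintro x ⟨_, -, hx⟩ ⟨_, p, hp, he⟩
    obtain ⟨rfl, -⟩ := Prod.mk.inj he
    exact absurd (mem_sdiff_pres.1 hp).2 (not_le.2 hx)
  · rw [disjoint_left]
    rintro y ⟨x, hxy, hx⟩ ⟨_, p, hp, he⟩
    obtain ⟨-, rfl⟩ := Prod.mk.inj he
    dsimp only at hxy hx
    exact absurd (hr_ge p.2 ⟨p.1, hp⟩) (not_le.2 (hxy ▸ hx))

end Factorization

theorem factorization_lemma_general (n m : ℕ) (g' : Set (ℕ × ℕ)) (hg' : IsPInj g')
    (hnm : n < m)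
    (hm : ∀ p ∈ g', (p : ℕ × ℕ).1 < m ∧ (p : ℕ × ℕ).2 < m) :
    (∀ h : Set (ℕ × ℕ), IsPInj h → pres h n = pres g' n →
      ∀ l : ℕ → ℕ, Set.InjOn l (pim (h \ pres h n)) →
        (∀ y ∈ pim (h \ pres h n), m ≤ l y) →
        h = pcomp
          ({p : ℕ × ℕ | p.1 = p.2 ∧ p.1 < n} ∪
            (fun p : ℕ × ℕ => (p.1, l p.2)) '' (h \ pres h n))
          (g' ∪ (fun b : ℕ => (l b, b)) '' pim (h \ pres h n))) ∧
    {h : Set (ℕ × ℕ) | IsPInj h ∧ pres h n = pres g' n} ⊆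
      {k : Set (ℕ × ℕ) | ∃ a b : Set (ℕ × ℕ), IsPInj a ∧
        {p : ℕ × ℕ | p.1 = p.2 ∧ p.1 < n} ⊆ a ∧
        IsPInj b ∧ pres b m = pres g' m ∧ k = pcomp a b} := by
  have hdom : ∀ p ∈ g', p.1 < m := fun p hp => (hm p hp).1
  refine ⟨fun h _ hres l hl hlm => eq_pcomp_union_inverse hnm hdom hres hl hlm, ?_⟩
  rintro h ⟨hh, hres⟩
  exact exists_pcomp_eq_of_pres_eq hg' hnm.le hdom hh hres

/-- For `m > max({n} ∪ dom g' ∪ im g')`, every partial injection `h` with `h↾n = g'↾n`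
factors as `h = (id_n ∪ h₂l) ∘ (g' ∪ l⁻¹)`, where `h₁ = h↾n`, `h₂ = h \ h₁`, and
`l : im(h₂) → ℕ \ {0,…,m−1}` is injective.  Consequently
`U_{n,g'} ⊆ (↑id_n) · U_{m,g'}`. -/
theorem factorization_lemma (n m : ℕ) (g' : Set (ℕ × ℕ)) (hg' : IsPInj g')
    (hg'fin : g'.Finite) (hnm : n < m)
    (hm : ∀ p ∈ g', (p : ℕ × ℕ).1 < m ∧ (p : ℕ × ℕ).2 < m) :
    (∀ h : Set (ℕ × ℕ), IsPInj h → pres h n = pres g' n →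
      ∀ l : ℕ → ℕ, Set.InjOn l (pim (h \ pres h n)) →
        (∀ y ∈ pim (h \ pres h n), m ≤ l y) →
        h = pcomp
          ({p : ℕ × ℕ | p.1 = p.2 ∧ p.1 < n} ∪
            (fun p : ℕ × ℕ => (p.1, l p.2)) '' (h \ pres h n))
          (g' ∪ (fun b : ℕ => (l b, b)) '' pim (h \ pres h n))) ∧
    {h : Set (ℕ × ℕ) | IsPInj h ∧ pres h n = pres g' n} ⊆
      {k : Set (ℕ × ℕ) | ∃ a b : Set (ℕ × ℕ), IsPInj a ∧
        {p : ℕ × ℕ | p.1 = p.2 ∧ p.1 < n} ⊆ a ∧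
        IsPInj b ∧ pres b m = pres g' m ∧ k = pcomp a b} :=
  factorization_lemma_general n m g' hg' hnm hm
end
end
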